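/- arXiv:1504.01829 — 3 statements merged into one kernel-verified Lean document; each statement's English description precedes it below -/
import Mathlib

section
/- Let p > 3 be a prime. Consider the 3-partite 3-uniform hypergraph H with vertex classes A = B = C = Z/pZ and edge set {(a,b,c) : a + b = c}. Then H contains no core on at most 8 vertices; that is, for all nonempty U ⊆ A, V ⊆ B, W ⊆ C with |U| + |V| + |W| ≤ 8, the subhypergraph induced on U ∪ V ∪ W has some vertex of degree at most 1. -/
/-- A small nonempty subset of `ZMod p` cannot be invariant under a nonzero translation. -/
lemma shift_lemma (p : ℕ) (hp : p.Prime) (hp3 : 3 < p)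
    (S : Finset (ZMod p)) (hS : S.Nonempty) (hS4 : S.card ≤ 4)
    (d : ZMod p) (hd : d ≠ 0) (h : S.image (d + ·) = S) : False := by
  haveI : Fact p.Prime := ⟨hp⟩
  obtain ⟨s0, hs0⟩ := hS
  have step : ∀ x ∈ S, d + x ∈ S := by
    intro x hx
    rw [← h]
    exact Finset.mem_image_of_mem _ hx
  have key : ∀ k : ℕ, (k : ZMod p) * d + s0 ∈ S := by
    intro k
    induction k with
    | zero => simpa using hs0
    | succ n ih =>
      have : ((n + 1 : ℕ) : ZMod p) * d + s0 = d + ((n : ℕ) * d + s0) := by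
        push_cast; ring
      rw [this]
      exact step _ ih
  have key' : ∀ x : ZMod p, x * d + s0 ∈ S := by
    intro x
    have := key x.val
    rwa [ZMod.natCast_val, ZMod.cast_id] at this
  have hinj : Function.Injective (fun x : ZMod p => x * d + s0) := by
    intro x y hxy
    simp only [add_left_inj] at hxy
    exact mul_right_cancel₀ hd hxy
  have hsub : Finset.univ.image (fun x : ZMod p => x * d + s0) ⊆ S := by
    intro z hz
    obtain ⟨x, _, rfl⟩ := Finset.mem_image.mp hz
    exact key' x
  have := Finset.card_le_card hsub
  rw [Finset.card_image_of_injective _ hinj, Finset.card_univ, ZMod.card] at this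
  have hp4 : p ≠ 4 := by rintro rfl; norm_num at hp
  omega

/-- Two distinct translates of a small set can't be equal to the same set. -/
lemma two_shift (p : ℕ) (hp : p.Prime) (hp3 : 3 < p)
    (S T : Finset (ZMod p)) (hS : S.Nonempty) (hS4 : S.card ≤ 4)
    (t1 t2 : ZMod p) (hne : t1 ≠ t2)
    (h1 : S.image (t1 + ·) = T) (h2 : S.image (t2 + ·) = T) : False := by
  have hcomp : (S.image ((t2 - t1) + ·)).image (t1 + ·) = S.image (t2 + ·) := by
    rw [Finset.image_image]
    congr 1
    funext x
    simp
    ring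
  rw [h2, ← h1] at hcomp
  have hinj : Function.Injective (fun x : ZMod p => t1 + x) := add_right_injective t1
  have := Finset.image_injective hinj hcomp
  exact shift_lemma p hp hp3 S hS hS4 (t2 - t1) (sub_ne_zero.mpr (Ne.symm hne)) this

/-- Two distinct "reflections" of a small set can't be equal to the same set. -/
lemma two_sub_shift (p : ℕ) (hp : p.Prime) (hp3 : 3 < p)
    (S T : Finset (ZMod p)) (hS : S.Nonempty) (hS4 : S.card ≤ 4)
    (t1 t2 : ZMod p) (hne : t1 ≠ t2)
    (h1 : S.image (t1 - ·) = T) (h2 : S.image (t2 - ·) = T) : False := by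
  have e1 : T.image (t1 - ·) = S.image ((t1 - t2) + ·) := by
    rw [← h2, Finset.image_image]
    congr 1
    funext x
    simp
    ring
  have e2 : T.image (t1 - ·) = S := by
    rw [← h1, Finset.image_image]
    have : ((fun x => t1 - x) ∘ fun x => t1 - x) = id := by
      funext x; simp
    rw [this, Finset.image_id]
  exact shift_lemma p hp hp3 S hS hS4 (t1 - t2) (sub_ne_zero.mpr hne) (e1 ▸ e2)

/-- In the 3-partite 3-uniform hypergraph on vertex classes `A = B = C = ZMod p`
with edges `{(a,b,c) : a + b = c}`, there is no core on at most 8 vertices: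
every nonempty induced subhypergraph on `U ∪ V ∪ W` with `|U| + |V| + |W| ≤ 8`
has a vertex of degree at most 1. -/
theorem stmt_2 (p : ℕ) (hp : p.Prime) (hp3 : 3 < p)
    (U V W : Finset (ZMod p)) (hU : U.Nonempty) (hV : V.Nonempty) (hW : W.Nonempty)
    (hcard : U.card + V.card + W.card ≤ 8) :
    (∃ a ∈ U, (V.filter (fun b => a + b ∈ W)).card ≤ 1) ∨
    (∃ b ∈ V, (U.filter (fun a => a + b ∈ W)).card ≤ 1) ∨
    (∃ c ∈ W, (U.filter (fun a => c - a ∈ V)).card ≤ 1) := by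
  by_contra hcon
  push_neg at hcon
  obtain ⟨hA, hB, hC⟩ := hcon
  -- injective-image cardinality bounds
  have hAleW : ∀ a : ZMod p, (V.filter fun b => a + b ∈ W).card ≤ W.card := by
    intro a
    have hsub : (V.filter fun b => a + b ∈ W).image (a + ·) ⊆ W := by
      intro c hc
      obtain ⟨b, hb, rfl⟩ := Finset.mem_image.mp hc
      exact (Finset.mem_filter.mp hb).2
    calc (V.filter fun b => a + b ∈ W).card
        = ((V.filter fun b => a + b ∈ W).image (a + ·)).card :=
          (Finset.card_image_of_injective _ (add_right_injective a)).symm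
      _ ≤ W.card := Finset.card_le_card hsub
  -- basic size facts
  have hsubinj : ∀ c : ZMod p, Function.Injective (fun x : ZMod p => c - x) :=
    fun c x y h => sub_right_inj.mp h
  have hUne := hU
  have hVne := hV
  obtain ⟨a0, ha0⟩ := hU
  obtain ⟨b0, hb0⟩ := hV
  have h2V : 2 ≤ V.card := by
    have h1 := hA a0 ha0
    have h2 := Finset.card_le_card (Finset.filter_subset (fun b => a0 + b ∈ W) V)
    omega
  have h2W : 2 ≤ W.card := by
    have h1 := hA a0 ha0
    have h2 := hAleW a0
    omega
  have h2U : 2 ≤ U.card := by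
    have h1 := hB b0 hb0
    have h2 := Finset.card_le_card (Finset.filter_subset (fun a => a + b0 ∈ W) U)
    omega
  -- full-degree implications
  have KA : ∀ a ∈ U, V.card ≤ (V.filter fun b => a + b ∈ W).card →
      ∀ b ∈ V, a + b ∈ W := by
    intro a ha hle b hb
    have heq := Finset.eq_of_subset_of_card_le (Finset.filter_subset _ V) hle
    rw [← heq] at hb
    exact (Finset.mem_filter.mp hb).2
  have KB : ∀ b ∈ V, U.card ≤ (U.filter fun a => a + b ∈ W).card →
      ∀ a ∈ U, a + b ∈ W := by
    intro b hb hle a ha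
    have heq := Finset.eq_of_subset_of_card_le (Finset.filter_subset _ U) hle
    rw [← heq] at ha
    exact (Finset.mem_filter.mp ha).2
  have KC : ∀ c ∈ W, U.card ≤ (U.filter fun a => c - a ∈ V).card →
      ∀ a ∈ U, c - a ∈ V := by
    intro c hc hle a ha
    have heq := Finset.eq_of_subset_of_card_le (Finset.filter_subset _ U) hle
    rw [← heq] at ha
    exact (Finset.mem_filter.mp ha).2
  have KW : ∀ a ∈ U, W.card ≤ (V.filter fun b => a + b ∈ W).card →
      ∀ c ∈ W, c - a ∈ V := by
    intro a ha hle c hc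
    have hsub : (V.filter fun b => a + b ∈ W).image (a + ·) ⊆ W := by
      intro c' hc'
      obtain ⟨b, hb, rfl⟩ := Finset.mem_image.mp hc'
      exact (Finset.mem_filter.mp hb).2
    have heq : (V.filter fun b => a + b ∈ W).image (a + ·) = W := by
      apply Finset.eq_of_subset_of_card_le hsub
      rw [Finset.card_image_of_injective _ (add_right_injective a)]
      exact hle
    rw [← heq] at hc
    obtain ⟨b, hb, hab⟩ := Finset.mem_image.mp hc
    have hbV := (Finset.mem_filter.mp hb).1
    have : c - a = b := by rw [← hab]; ring
    rwa [this]
  -- case analysis on |U|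
  have hu : U.card = 2 ∨ U.card = 3 ∨ U.card = 4 := by omega
  rcases hu with hu | hu | hu
  · -- |U| = 2
    obtain ⟨a1, ha1, a2, ha2, hne⟩ := Finset.one_lt_card.mp (by omega : 1 < U.card)
    have hKB : ∀ b ∈ V, ∀ a ∈ U, a + b ∈ W := by
      intro b hb
      exact KB b hb (by have := hB b hb; omega)
    have hsub1 : V.image (a1 + ·) ⊆ W := by
      intro c hc
      obtain ⟨b, hb, rfl⟩ := Finset.mem_image.mp hc
      exact hKB b hb a1 ha1
    have hsub2 : V.image (a2 + ·) ⊆ W := by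
      intro c hc
      obtain ⟨b, hb, rfl⟩ := Finset.mem_image.mp hc
      exact hKB b hb a2 ha2
    have hvw : V.card ≤ W.card := by
      have := Finset.card_le_card hsub1
      rwa [Finset.card_image_of_injective _ (add_right_injective a1)] at this
    have hv : V.card = 2 ∨ V.card = 3 := by omega
    rcases hv with hv | hv
    · -- |V| = 2 : use degrees in W
      have hW1 : W ⊆ V.image (a1 + ·) := by
        intro c hc
        have h1 : c - a1 ∈ V := KC c hc (by have := hC c hc; omega) a1 ha1
        exact Finset.mem_image.mpr ⟨c - a1, h1, by ring⟩
      have hW2 : W ⊆ V.image (a2 + ·) := by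
        intro c hc
        have h1 : c - a2 ∈ V := KC c hc (by have := hC c hc; omega) a2 ha2
        exact Finset.mem_image.mpr ⟨c - a2, h1, by ring⟩
      exact two_shift p hp hp3 V W hVne (by omega) a1 a2 hne
        (Finset.Subset.antisymm hsub1 hW1) (Finset.Subset.antisymm hsub2 hW2)
    · -- |V| = 3 : forces |W| = 3 and translates fill W
      have e1 : V.image (a1 + ·) = W := by
        apply Finset.eq_of_subset_of_card_le hsub1
        rw [Finset.card_image_of_injective _ (add_right_injective a1)]
        omega
      have e2 : V.image (a2 + ·) = W := by
        apply Finset.eq_of_subset_of_card_le hsub2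
        rw [Finset.card_image_of_injective _ (add_right_injective a2)]
        omega
      exact two_shift p hp hp3 V W hVne (by omega) a1 a2 hne e1 e2
  · -- |U| = 3
    have hv : V.card = 2 ∨ V.card = 3 := by omega
    rcases hv with hv | hv
    · -- |V| = 2
      obtain ⟨b1, hb1, b2, hb2, hne⟩ := Finset.one_lt_card.mp (by omega : 1 < V.card)
      have hKA : ∀ a ∈ U, ∀ b ∈ V, a + b ∈ W := by
        intro a ha
        exact KA a ha (by have := hA a ha; omega)
      have hsub1 : U.image (b1 + ·) ⊆ W := by
        intro c hc
        obtain ⟨a, ha, rfl⟩ := Finset.mem_image.mp hc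
        rw [add_comm]
        exact hKA a ha b1 hb1
      have hsub2 : U.image (b2 + ·) ⊆ W := by
        intro c hc
        obtain ⟨a, ha, rfl⟩ := Finset.mem_image.mp hc
        rw [add_comm]
        exact hKA a ha b2 hb2
      have huw : U.card ≤ W.card := by
        have := Finset.card_le_card hsub1
        rwa [Finset.card_image_of_injective _ (add_right_injective b1)] at this
      have e1 : U.image (b1 + ·) = W := by
        apply Finset.eq_of_subset_of_card_le hsub1
        rw [Finset.card_image_of_injective _ (add_right_injective b1)]
        omega
      have e2 : U.image (b2 + ·) = W := by
        apply Finset.eq_of_subset_of_card_le hsub2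
        rw [Finset.card_image_of_injective _ (add_right_injective b2)]
        omega
      exact two_shift p hp hp3 U W hUne (by omega) b1 b2 hne e1 e2
    · -- |V| = 3, so |W| = 2
      obtain ⟨c1, hc1, c2, hc2, hne⟩ := Finset.one_lt_card.mp (by omega : 1 < W.card)
      have hw : W.card = 2 := by omega
      have hKW : ∀ a ∈ U, ∀ c ∈ W, c - a ∈ V := by
        intro a ha
        exact KW a ha (by have := hA a ha; omega)
      have hsub1 : U.image (c1 - ·) ⊆ V := by
        intro x hx
        obtain ⟨a, ha, rfl⟩ := Finset.mem_image.mp hx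
        exact hKW a ha c1 hc1
      have hsub2 : U.image (c2 - ·) ⊆ V := by
        intro x hx
        obtain ⟨a, ha, rfl⟩ := Finset.mem_image.mp hx
        exact hKW a ha c2 hc2
      have e1 : U.image (c1 - ·) = V := by
        apply Finset.eq_of_subset_of_card_le hsub1
        rw [Finset.card_image_of_injective _ (hsubinj c1)]
        omega
      have e2 : U.image (c2 - ·) = V := by
        apply Finset.eq_of_subset_of_card_le hsub2
        rw [Finset.card_image_of_injective _ (hsubinj c2)]
        omega
      exact two_sub_shift p hp hp3 U V hUne (by omega) c1 c2 hne e1 e2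
  · -- |U| = 4, so |V| = |W| = 2
    obtain ⟨a1, ha1, a2, ha2, hne⟩ := Finset.one_lt_card.mp (by omega : 1 < U.card)
    have hKA : ∀ a ∈ U, ∀ b ∈ V, a + b ∈ W := by
      intro a ha
      exact KA a ha (by have := hA a ha; omega)
    have hsub : ∀ a ∈ U, V.image (a + ·) ⊆ W := by
      intro a ha c hc
      obtain ⟨b, hb, rfl⟩ := Finset.mem_image.mp hc
      exact hKA a ha b hb
    have e : ∀ a ∈ U, V.image (a + ·) = W := by
      intro a ha
      apply Finset.eq_of_subset_of_card_le (hsub a ha)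
      rw [Finset.card_image_of_injective _ (add_right_injective a)]
      omega
    exact two_shift p hp hp3 V W hVne (by omega) a1 a2 hne (e a1 ha1) (e a2 ha2)
end

section
/- Let H be a 3-uniform hypergraph on n vertices with e edges. If e ≥ n³/k² + 2n³/k³ for some k ≤ n, then H has a subset S of at most k vertices spanning at least |S| − 2 edges, and hence a core on at most k vertices. -/
open Finset

/-- Stripping lemma: a vertex set spanning at least `|S| - 1` edges (with at least one
edge) contains a nonempty subset in which every vertex has degree at least 2. -/
private lemma strip_core {V : Type*} [Fintype V] [DecidableEq V]
    (E : Finset (Finset V)) (hunif : ∀ e ∈ E, e.card = 3) :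
    ∀ N S, S.card ≤ N → 0 < (E.filter (fun e => e ⊆ S)).card →
      S.card ≤ (E.filter (fun e => e ⊆ S)).card + 1 →
      ∃ T, T ⊆ S ∧ T.Nonempty ∧
        ∀ v ∈ T, 2 ≤ (E.filter (fun e => v ∈ e ∧ e ⊆ T)).card := by
  intro N
  induction N with
  | zero =>
    intro S hSN hc _
    exfalso
    obtain ⟨e0, he0⟩ := Finset.card_pos.mp hc
    rw [Finset.mem_filter] at he0
    have h3 : e0.card = 3 := hunif e0 he0.1
    have := Finset.card_le_card he0.2
    omega
  | succ N ih =>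
    intro S hSN hc hcard
    obtain ⟨e0, he0⟩ := Finset.card_pos.mp hc
    rw [Finset.mem_filter] at he0
    have h3 : e0.card = 3 := hunif e0 he0.1
    have hS3 : 3 ≤ S.card := h3 ▸ Finset.card_le_card he0.2
    by_cases hall : ∀ v ∈ S, 2 ≤ (E.filter (fun e => v ∈ e ∧ e ⊆ S)).card
    · refine ⟨S, Finset.Subset.rfl, ?_, hall⟩
      exact Finset.card_pos.mp (by omega)
    · push_neg at hall
      obtain ⟨v, hv, hdeg⟩ := hall
      -- split edges inside S by whether they contain v
      have hsplit : (E.filter (fun e => v ∈ e ∧ e ⊆ S)).card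
          + (E.filter (fun e => e ⊆ S.erase v)).card
          = (E.filter (fun e => e ⊆ S)).card := by
        have h1 : E.filter (fun e => v ∈ e ∧ e ⊆ S)
            = (E.filter (fun e => e ⊆ S)).filter (fun e => v ∈ e) := by
          rw [Finset.filter_filter]
          apply Finset.filter_congr
          intro e _
          tauto
        have h2 : E.filter (fun e => e ⊆ S.erase v)
            = (E.filter (fun e => e ⊆ S)).filter (fun e => ¬ v ∈ e) := by
          rw [Finset.filter_filter]
          apply Finset.filter_congr
          intro e _
          simp only [Finset.subset_erase]
        rw [h1, h2]
        exact Finset.card_filter_add_card_filter_not _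
      have hdlt : (E.filter (fun e => v ∈ e ∧ e ⊆ S)).card ≤ 1 := by omega
      have hcard_erase : (S.erase v).card = S.card - 1 := Finset.card_erase_of_mem hv
      obtain ⟨T, hTS, hTne, hTdeg⟩ := ih (S.erase v) (by omega) (by omega) (by omega)
      exact ⟨T, hTS.trans (Finset.erase_subset v S), hTne, hTdeg⟩

/-- Number of `k`-subsets of the vertex set containing a fixed `3`-set. -/
private lemma count_sup {V : Type*} [Fintype V] [DecidableEq V] (e : Finset V)
    (he : e.card = 3) (k : ℕ) (h3k : 3 ≤ k) :
    ((Finset.powersetCard k (Finset.univ : Finset V)).filter (fun S => e ⊆ S)).card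
      = Nat.choose (Fintype.card V - 3) (k - 3) := by
  have hbij : ((Finset.powersetCard k (Finset.univ : Finset V)).filter
        (fun S => e ⊆ S)).card
      = (Finset.powersetCard (k - 3) ((Finset.univ : Finset V) \ e)).card := by
    apply Finset.card_bij' (fun S _ => S \ e) (fun T _ => T ∪ e)
    · intro S hS
      rw [Finset.mem_filter, Finset.mem_powersetCard] at hS
      rw [Finset.mem_powersetCard]
      refine ⟨Finset.sdiff_subset_sdiff hS.1.1 (Finset.Subset.refl e), ?_⟩
      rw [Finset.card_sdiff_of_subset hS.2, he, hS.1.2]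
    · intro T hT
      rw [Finset.mem_powersetCard] at hT
      rw [Finset.mem_filter, Finset.mem_powersetCard]
      have hdisj : Disjoint T e :=
        Finset.disjoint_of_subset_left hT.1 Finset.sdiff_disjoint
      refine ⟨⟨Finset.subset_univ _, ?_⟩, Finset.subset_union_right⟩
      rw [Finset.card_union_of_disjoint hdisj, hT.2, he]
      omega
    · intro S hS
      rw [Finset.mem_filter] at hS
      exact Finset.sdiff_union_of_subset hS.2
    · intro T hT
      rw [Finset.mem_powersetCard] at hT
      have hdisj : Disjoint T e :=
        Finset.disjoint_of_subset_left hT.1 Finset.sdiff_disjoint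
      exact Finset.union_sdiff_cancel_right hdisj
  rw [hbij, Finset.card_powersetCard, Finset.card_sdiff_of_subset (Finset.subset_univ e), he,
    Finset.card_univ]

/-- If `e ≥ n³/k² + 2n³/k³` for some `k ≤ n`, then the 3-uniform hypergraph has a
subset `S` of at most `k` vertices spanning at least `|S| - 2` edges, and hence
contains a core on at most `k` vertices. -/
theorem stmt_13 {V : Type*} [Fintype V] [DecidableEq V]
    (E : Finset (Finset V)) (hunif : ∀ e ∈ E, e.card = 3)
    (k : ℕ) (hk0 : 0 < k) (hk : k ≤ Fintype.card V)
    (he : ((Fintype.card V : ℝ)^3 / k^2 + 2 * (Fintype.card V : ℝ)^3 / k^3) ≤ E.card) :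
    (∃ S : Finset V, S.card ≤ k ∧ S.card ≤ (E.filter (fun e => e ⊆ S)).card + 2) ∧
    (∃ T : Finset V, T.Nonempty ∧ T.card ≤ k ∧
      ∀ v ∈ T, 2 ≤ (E.filter (fun e => v ∈ e ∧ e ⊆ T)).card) := by
  classical
  have hEsub : E ⊆ Finset.powersetCard 3 Finset.univ := by
    intro e heE
    rw [Finset.mem_powersetCard]
    exact ⟨Finset.subset_univ e, hunif e heE⟩
  have hE3 : E.card ≤ (Fintype.card V).choose 3 := by
    have h := Finset.card_le_card hEsub
    rwa [Finset.card_powersetCard, Finset.card_univ] at h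
  by_cases hk2 : k ≤ 2
  · -- vacuous case: the hypothesis is contradictory
    exfalso
    have hch : (Fintype.card V).choose 3 * 6 ≤ Fintype.card V ^ 3 := by
      have h1 : (Fintype.card V).choose 3 * 6 = (Fintype.card V).descFactorial 3 := by
        rw [Nat.descFactorial_eq_factorial_mul_choose]
        simp [Nat.factorial]
        ring
      rw [h1]
      exact Nat.descFactorial_le_pow _ 3
    have hn1 : 1 ≤ Fintype.card V := le_trans hk0 hk
    have hnR : (1:ℝ) ≤ (Fintype.card V : ℝ) := by exact_mod_cast hn1
    have heR : (E.card : ℝ) * 6 ≤ (Fintype.card V : ℝ)^3 := by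
      have := le_trans (Nat.mul_le_mul_right 6 hE3) hch
      exact_mod_cast this
    have hn3 : (0:ℝ) < (Fintype.card V : ℝ)^3 := by positivity
    interval_cases k <;> norm_num at he <;> nlinarith [he, heR, hn3]
  · push_neg at hk2
    obtain ⟨j, rfl⟩ : ∃ j, k = j + 3 := ⟨k - 3, by omega⟩
    obtain ⟨m', hm'⟩ := Nat.exists_eq_add_of_le hk
    set M : ℕ := j + m' with hM
    have hnM : Fintype.card V = M + 3 := by omega
    have hjM : j ≤ M := by omega
    -- the key real inequality, denominators cleared
    have RA : ((j:ℝ)+1) * (((M:ℝ)+3)*((M:ℝ)+2)*((M:ℝ)+1))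
        < (E.card : ℝ) * (((j:ℝ)+3)*((j:ℝ)+2)*((j:ℝ)+1)) := by
      have hjpos : (0:ℝ) < (j:ℝ) + 3 := by positivity
      have hMnn : (0:ℝ) ≤ (M:ℝ) := Nat.cast_nonneg M
      have hjnn : (0:ℝ) ≤ (j:ℝ) := Nat.cast_nonneg j
      rw [hnM] at he
      push_cast at he
      have h1 : ((M:ℝ)+3)^3 * (((j:ℝ)+3) + 2) ≤ (E.card : ℝ) * ((j:ℝ)+3)^3 := by
        have hne : ((j:ℝ)+3) ≠ 0 := ne_of_gt hjpos
        have hmul := mul_le_mul_of_nonneg_right he (le_of_lt (pow_pos hjpos 3))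
        have ha : ((M:ℝ)+3)^3/((j:ℝ)+3)^2*((j:ℝ)+3)^3 = ((M:ℝ)+3)^3*((j:ℝ)+3) := by
          field_simp
        have hb : 2*((M:ℝ)+3)^3/((j:ℝ)+3)^3*((j:ℝ)+3)^3 = 2*((M:ℝ)+3)^3 := by
          field_simp
        rw [add_mul, ha, hb] at hmul
        linarith
      nlinarith [h1, hMnn, hjnn, hjpos, sq_nonneg ((M:ℝ) - (j:ℝ)),
        mul_pos hjpos hjpos, mul_nonneg hMnn hjnn,
        mul_nonneg (mul_nonneg hMnn hMnn) hMnn,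
        mul_nonneg (mul_nonneg hMnn hMnn) hjnn,
        mul_nonneg (mul_nonneg hMnn hjnn) hjnn,
        mul_nonneg (mul_nonneg hjnn hjnn) hjnn]
    have RN : (j+1) * ((M+3)*(M+2)*(M+1)) < E.card * ((j+3)*(j+2)*(j+1)) := by
      exact_mod_cast RA
    -- binomial identity
    have CI : Nat.choose (M+3) (j+3) * ((j+3)*(j+2)*(j+1))
        = (M+3)*(M+2)*(M+1) * Nat.choose M j := by
      have e1 := Nat.add_one_mul_choose_eq (M+2) (j+2)
      have e2 := Nat.add_one_mul_choose_eq (M+1) (j+1)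
      have e3 := Nat.add_one_mul_choose_eq M j
      calc Nat.choose (M+3) (j+3) * ((j+3)*(j+2)*(j+1))
          = (Nat.choose (M+2+1) (j+2+1) * (j+2+1)) * ((j+2)*(j+1)) := by ring_nf
        _ = ((M+2+1) * Nat.choose (M+2) (j+2)) * ((j+2)*(j+1)) := by rw [← e1]
        _ = (M+3) * ((Nat.choose (M+1+1) (j+1+1) * (j+1+1)) * (j+1)) := by ring_nf
        _ = (M+3) * (((M+1+1) * Nat.choose (M+1) (j+1)) * (j+1)) := by rw [← e2]
        _ = (M+3) * ((M+2) * (Nat.choose (M+1) (j+1) * (j+1))) := by ring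
        _ = (M+3) * ((M+2) * ((M+1) * Nat.choose M j)) := by rw [← e3]
        _ = (M+3)*(M+2)*(M+1) * Nat.choose M j := by ring
    have hchpos : 0 < Nat.choose M j := Nat.choose_pos hjM
    have key : (j+1) * Nat.choose (M+3) (j+3) < E.card * Nat.choose M j := by
      have h2 := (Nat.mul_lt_mul_right hchpos).mpr RN
      apply lt_of_mul_lt_mul_right ?_ (Nat.zero_le ((j+3)*(j+2)*(j+1)))
      calc (j+1) * Nat.choose (M+3) (j+3) * ((j+3)*(j+2)*(j+1))
          = (j+1) * (Nat.choose (M+3) (j+3) * ((j+3)*(j+2)*(j+1))) := by ring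
        _ = (j+1) * ((M+3)*(M+2)*(M+1) * Nat.choose M j) := by rw [CI]
        _ = (j+1) * ((M+3)*(M+2)*(M+1)) * Nat.choose M j := by ring
        _ < E.card * ((j+3)*(j+2)*(j+1)) * Nat.choose M j := h2
        _ = E.card * Nat.choose M j * ((j+3)*(j+2)*(j+1)) := by ring
    -- double counting
    have hsum : ∑ S ∈ Finset.powersetCard (j+3) (Finset.univ : Finset V),
        (E.filter (fun e => e ⊆ S)).card = E.card * Nat.choose M j := by
      have step : ∀ S ∈ Finset.powersetCard (j+3) (Finset.univ : Finset V),
          (E.filter (fun e => e ⊆ S)).card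
            = ∑ e ∈ E, if e ⊆ S then 1 else 0 :=
        fun S _ => Finset.card_filter _ _
      rw [Finset.sum_congr rfl step, Finset.sum_comm]
      have step2 : ∀ e ∈ E,
          (∑ S ∈ Finset.powersetCard (j+3) (Finset.univ : Finset V),
            if e ⊆ S then 1 else 0) = Nat.choose M j := by
        intro e heE
        rw [← Finset.card_filter]
        have h := count_sup e (hunif e heE) (j+3) (by omega)
        rw [h, hnM]
        congr 1
      rw [Finset.sum_congr rfl step2, Finset.sum_const, smul_eq_mul, mul_comm]
    have hlt : ∑ _S ∈ Finset.powersetCard (j+3) (Finset.univ : Finset V), (j+1)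
        < ∑ S ∈ Finset.powersetCard (j+3) (Finset.univ : Finset V),
            (E.filter (fun e => e ⊆ S)).card := by
      rw [hsum, Finset.sum_const, smul_eq_mul, Finset.card_powersetCard,
        Finset.card_univ, hnM, mul_comm]
      exact key
    obtain ⟨S, hSmem, hSlt⟩ := Finset.exists_lt_of_sum_lt hlt
    rw [Finset.mem_powersetCard] at hSmem
    have hScard : S.card = j + 3 := hSmem.2
    have hc2 : j + 2 ≤ (E.filter (fun e => e ⊆ S)).card := hSlt
    constructor
    · exact ⟨S, by omega, by omega⟩
    · obtain ⟨T, hTS, hTne, hTdeg⟩ := strip_core E hunif S.card S le_rfl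
        (by omega) (by omega)
      exact ⟨T, hTne, le_trans (Finset.card_le_card hTS) (by omega), hTdeg⟩
end

section
/- Let F1, F2 be two edge-disjoint (6,3)-configurations in a 3-uniform hypergraph (each: 3 edges on 6 vertices, with three vertices of degree 2 and three of degree 1). If F1 and F2 have exactly the same set of three degree-1 vertices, then F1 ∪ F2 is a core on at most 9 vertices spanning 6 edges. -/
/-- If `F1, F2` are edge-disjoint (6,3)-configurations (3 edges on 6 vertices, three
vertices of degree 2 and three of degree 1) with exactly the same set of three
degree-1 vertices, then `F1 ∪ F2` is a core on at most 9 vertices spanning 6 edges. -/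
theorem stmt_16 {V : Type*} [DecidableEq V]
    (E : Finset (Finset V)) (hunif : ∀ e ∈ E, e.card = 3)
    (F1 F2 : Finset (Finset V)) (hF1 : F1 ⊆ E) (hF2 : F2 ⊆ E)
    (hc1 : F1.card = 3) (hc2 : F2.card = 3)
    (hv1 : (F1.sup id).card = 6) (hv2 : (F2.sup id).card = 6)
    (hd1 : ((F1.sup id).filter (fun v => (F1.filter (fun e => v ∈ e)).card = 2)).card = 3)
    (hd1' : ((F1.sup id).filter (fun v => (F1.filter (fun e => v ∈ e)).card = 1)).card = 3)
    (hd2 : ((F2.sup id).filter (fun v => (F2.filter (fun e => v ∈ e)).card = 2)).card = 3)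
    (hd2' : ((F2.sup id).filter (fun v => (F2.filter (fun e => v ∈ e)).card = 1)).card = 3)
    (hdisj : Disjoint F1 F2)
    (hsame : (F1.sup id).filter (fun v => (F1.filter (fun e => v ∈ e)).card = 1) =
             (F2.sup id).filter (fun v => (F2.filter (fun e => v ∈ e)).card = 1)) :
    ((F1.sup id ∪ F2.sup id).Nonempty ∧ (F1.sup id ∪ F2.sup id).card ≤ 9 ∧
      (F1 ∪ F2).card = 6 ∧
      ∀ v ∈ F1.sup id ∪ F2.sup id,
        2 ≤ ((F1 ∪ F2).filter (fun e => v ∈ e)).card) := by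
  -- every vertex of a configuration has degree 1 or 2
  have key : ∀ (F : Finset (Finset V)), (F.sup id).card = 6 →
      ((F.sup id).filter (fun v => (F.filter (fun e => v ∈ e)).card = 2)).card = 3 →
      ((F.sup id).filter (fun v => (F.filter (fun e => v ∈ e)).card = 1)).card = 3 →
      ∀ v ∈ F.sup id,
        (F.filter (fun e => v ∈ e)).card = 2 ∨ (F.filter (fun e => v ∈ e)).card = 1 := by
    intro F hv hd hd' v hvF
    have hdj : Disjoint ((F.sup id).filter (fun v => (F.filter (fun e => v ∈ e)).card = 2))
        ((F.sup id).filter (fun v => (F.filter (fun e => v ∈ e)).card = 1)) := by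
      rw [Finset.disjoint_left]
      intro a ha hb
      have h2 := (Finset.mem_filter.mp ha).2
      have h1 := (Finset.mem_filter.mp hb).2
      omega
    have hsub : ((F.sup id).filter (fun v => (F.filter (fun e => v ∈ e)).card = 2)) ∪
        ((F.sup id).filter (fun v => (F.filter (fun e => v ∈ e)).card = 1)) ⊆ F.sup id :=
      Finset.union_subset (Finset.filter_subset _ _) (Finset.filter_subset _ _)
    have heq : ((F.sup id).filter (fun v => (F.filter (fun e => v ∈ e)).card = 2)) ∪
        ((F.sup id).filter (fun v => (F.filter (fun e => v ∈ e)).card = 1)) = F.sup id := by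
      apply Finset.eq_of_subset_of_card_le hsub
      rw [Finset.card_union_of_disjoint hdj, hd, hd', hv]
    rw [← heq, Finset.mem_union] at hvF
    rcases hvF with h | h
    · exact Or.inl (Finset.mem_filter.mp h).2
    · exact Or.inr (Finset.mem_filter.mp h).2
  refine ⟨?_, ?_, ?_, ?_⟩
  · have : (F1.sup id).Nonempty := Finset.card_pos.mp (by rw [hv1]; norm_num)
    exact this.mono Finset.subset_union_left
  · have hS1 : ((F1.sup id).filter (fun v => (F1.filter (fun e => v ∈ e)).card = 1)) ⊆
        F1.sup id ∩ F2.sup id := by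
      intro v hvS
      refine Finset.mem_inter.mpr ⟨(Finset.mem_filter.mp hvS).1, ?_⟩
      rw [hsame] at hvS
      exact (Finset.mem_filter.mp hvS).1
    have h3 : 3 ≤ (F1.sup id ∩ F2.sup id).card := by
      calc 3 = ((F1.sup id).filter (fun v => (F1.filter (fun e => v ∈ e)).card = 1)).card :=
            hd1'.symm
        _ ≤ _ := Finset.card_le_card hS1
    have := Finset.card_union_add_card_inter (F1.sup id) (F2.sup id)
    omega
  · rw [Finset.card_union_of_disjoint hdisj, hc1, hc2]
  · intro v hv
    rw [Finset.mem_union] at hv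
    rw [Finset.filter_union,
      Finset.card_union_of_disjoint (Finset.disjoint_filter_filter hdisj)]
    rcases hv with h | h
    · rcases key F1 hv1 hd1 hd1' v h with h2 | h1
      · omega
      · have hvS : v ∈ (F2.sup id).filter (fun v => (F2.filter (fun e => v ∈ e)).card = 1) := by
          rw [← hsame]; exact Finset.mem_filter.mpr ⟨h, h1⟩
        have := (Finset.mem_filter.mp hvS).2
        omega
    · rcases key F2 hv2 hd2 hd2' v h with h2 | h1
      · omega
      · have hvS : v ∈ (F1.sup id).filter (fun v => (F1.filter (fun e => v ∈ e)).card = 1) := by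
          rw [hsame]; exact Finset.mem_filter.mpr ⟨h, h1⟩
        have := (Finset.mem_filter.mp hvS).2
        omega
end
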